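/- arXiv:1205.1193 — 7 statements merged into one kernel-verified Lean document; each statement's English description precedes it below -/
import Mathlib

section
/- Let m be a positive integer and let γ ≥ 1 be a real number. If x₁ ≥ x₂ ≥ … ≥ x_m ≥ 0 are real numbers, then (∑_{i=1}^m (−1)^{i−1} x_i)^γ ≤ ∑_{i=1}^m (−1)^{i−1} x_i^γ. -/
/-!
Write `S(x) = x₀ - x₁ + S(x₂, x₃, …)`. For antitone nonnegative `x` the tail sum `s` lies in
`[0, x₁]`, and for a convex `f` the increment `f (t + d) - f t` is monotone in `t`; with
`d = x₀ - x₁ ≥ 0` this gives `f (d + s) ≤ f x₀ - f x₁ + f s`, so the inequality `f S ≤ ∑ ± f xᵢ`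
passes from `(x₂, x₃, …)` to `(x₀, x₁, …)`. Apply it to `f = (· ^ γ)`.
-/

open Finset

theorem ConvexOn.map_add_sub_map_le_map_add_sub_map {𝕜 : Type*} [Field 𝕜] [LinearOrder 𝕜]
    [IsStrictOrderedRing 𝕜] {s : Set 𝕜} {f : 𝕜 → 𝕜} (hf : ConvexOn 𝕜 s f) {a b d : 𝕜}
    (ha : a ∈ s) (hbd : b + d ∈ s) (hab : a ≤ b) (hd : 0 ≤ d) :
    f (a + d) - f a ≤ f (b + d) - f b := by
  rcases (hab.trans (le_add_of_nonneg_right hd)).eq_or_lt with had | had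
  · obtain rfl : d = 0 := by linarith
    obtain rfl : a = b := by linarith
    rfl
  -- `a + d` and `b` are the convex combinations of `a` and `b + d` with swapped weights.
  have hL : b + d - a ≠ 0 := (sub_pos.2 had).ne'
  have hw₁ : 0 ≤ (b - a) / (b + d - a) := div_nonneg (sub_nonneg.2 hab) (sub_pos.2 had).le
  have hw₂ : 0 ≤ d / (b + d - a) := div_nonneg hd (sub_pos.2 had).le
  have hsum : (b - a) / (b + d - a) + d / (b + d - a) = 1 := by field_simp; ring
  have h₁ := hf.2 ha hbd hw₁ hw₂ hsum
  have h₂ := hf.2 ha hbd hw₂ hw₁ ((add_comm _ _).trans hsum)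
  have e₁ : ((b - a) / (b + d - a)) • a + (d / (b + d - a)) • (b + d) = a + d := by
    simp only [smul_eq_mul]; field_simp; ring
  have e₂ : (d / (b + d - a)) • a + ((b - a) / (b + d - a)) • (b + d) = b := by
    simp only [smul_eq_mul]; field_simp; ring
  rw [e₁, smul_eq_mul, smul_eq_mul] at h₁
  rw [e₂, smul_eq_mul, smul_eq_mul] at h₂
  linear_combination h₁ + h₂ + (f a + f (b + d)) * hsum

theorem sum_range_add_two_neg_one_pow_mul {R : Type*} [CommRing R] (f : ℕ → R) (n : ℕ) :
    ∑ i ∈ range (n + 2), (-1) ^ i * f i = f 0 - f 1 + ∑ i ∈ range n, (-1) ^ i * f (i + 2) := by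
  rw [sum_range_succ' _ (n + 1), sum_range_succ' _ n]
  simp only [pow_succ, zero_add, pow_zero, one_mul, mul_neg, mul_one, neg_neg, neg_mul]
  ring

theorem Antitone.sum_range_neg_one_pow_mul_mem_Icc {R : Type*} [CommRing R] [LinearOrder R]
    [IsStrictOrderedRing R] {x : ℕ → R} (hx : Antitone x) (hx₀ : ∀ i, 0 ≤ x i) (m : ℕ) :
    ∑ i ∈ range m, (-1) ^ i * x i ∈ Set.Icc 0 (x 0) := by
  induction m using Nat.twoStepInduction generalizing x with
  | zero => simpa using hx₀ 0
  | one => simpa using hx₀ 0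
  | more n ih _ =>
    have hx' : Antitone (fun i => x (i + 2)) := hx.comp_monotone (add_left_mono (a := 2))
    obtain ⟨h₀, h₂⟩ := ih hx' (fun i => hx₀ _)
    have h₁₀ : x 1 ≤ x 0 := hx zero_le_one
    have h₂₁ : x 2 ≤ x 1 := hx one_le_two
    rw [sum_range_add_two_neg_one_pow_mul]
    constructor <;> linarith

theorem ConvexOn.map_sum_range_neg_one_pow_mul_le {𝕜 : Type*} [Field 𝕜] [LinearOrder 𝕜]
    [IsStrictOrderedRing 𝕜] {f : 𝕜 → 𝕜} (hf : ConvexOn 𝕜 (Set.Ici 0) f) (hf₀ : f 0 ≤ 0)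
    {x : ℕ → 𝕜} (hx : Antitone x) (hx₀ : ∀ i, 0 ≤ x i) (m : ℕ) :
    f (∑ i ∈ range m, (-1) ^ i * x i) ≤ ∑ i ∈ range m, (-1) ^ i * f (x i) := by
  induction m using Nat.twoStepInduction generalizing x with
  | zero => simpa using hf₀
  | one => simp
  | more n ih _ =>
    have hx' : Antitone (fun i => x (i + 2)) := hx.comp_monotone (add_left_mono (a := 2))
    have hS := hx'.sum_range_neg_one_pow_mul_mem_Icc (fun i => hx₀ _) n
    have hinc := hf.map_add_sub_map_le_map_add_sub_map hS.1 (b := x 1) (d := x 0 - x 1)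
      (by simp [hx₀ 0]) (hS.2.trans (hx one_le_two)) (sub_nonneg.2 (hx zero_le_one))
    rw [sum_range_add_two_neg_one_pow_mul, sum_range_add_two_neg_one_pow_mul (fun i => f (x i))]
    rw [add_sub_cancel, add_comm] at hinc
    linarith [ih hx' (fun i => hx₀ _)]

theorem alternating_sum_rpow_le_general (m : ℕ) (γ : ℝ) (hγ : 1 ≤ γ)
    (x : ℕ → ℝ) (hmono : ∀ i j, i ≤ j → j < m → x j ≤ x i)
    (hnonneg : ∀ i, i < m → 0 ≤ x i) :
    (∑ i ∈ Finset.range m, (-1 : ℝ) ^ i * x i) ^ γ ≤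
      ∑ i ∈ Finset.range m, (-1 : ℝ) ^ i * x i ^ γ := by
  -- Extending `x` by `0` past `m` makes it antitone and nonnegative on all of `ℕ`.
  set y : ℕ → ℝ := fun i => if i < m then x i else 0
  have hy₀ : ∀ i, 0 ≤ y i := fun i => by
    by_cases hi : i < m <;> simp [y, hi, hnonneg]
  have hy : Antitone y := fun i j hij => by
    by_cases hj : j < m
    · simp [y, hj, hij.trans_lt hj, hmono i j hij hj]
    · simpa [y, hj] using hy₀ i
  have hxy (g : ℝ → ℝ) : ∑ i ∈ range m, (-1) ^ i * g (x i) = ∑ i ∈ range m, (-1) ^ i * g (y i) :=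
    sum_congr rfl fun i hi => by simp [y, mem_range.1 hi]
  have key := (convexOn_rpow hγ).map_sum_range_neg_one_pow_mul_le
    (by simp [Real.zero_rpow (by positivity : γ ≠ 0)]) hy hy₀ m
  calc _ = (∑ i ∈ range m, (-1) ^ i * y i) ^ γ := congrArg (· ^ γ) (hxy id)
    _ ≤ _ := key
    _ = _ := (hxy (· ^ γ)).symm

/-- If `m ≥ 1`, `γ ≥ 1` and `x₁ ≥ x₂ ≥ … ≥ x_m ≥ 0`, then
`(∑_{i=1}^m (−1)^{i−1} x_i)^γ ≤ ∑_{i=1}^m (−1)^{i−1} x_i^γ`. -/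
theorem alternating_sum_rpow_le (m : ℕ) (hm : 0 < m) (γ : ℝ) (hγ : 1 ≤ γ)
    (x : ℕ → ℝ) (hmono : ∀ i j, i ≤ j → j < m → x j ≤ x i)
    (hnonneg : ∀ i, i < m → 0 ≤ x i) :
    (∑ i ∈ Finset.range m, (-1 : ℝ) ^ i * x i) ^ γ ≤
      ∑ i ∈ Finset.range m, (-1 : ℝ) ^ i * x i ^ γ :=
  alternating_sum_rpow_le_general m γ hγ x hmono hnonneg
end

section
/- Let n > d > k ≥ 0 be integers. There exists a constant C > 0 such that for every measurable set E ⊆ (0,∞) and every s > 0, ∫_s^∞ χ_E(t) (t² − s²)^{((d−k)/2) − 1} t dt ≤ C (∫_s^∞ χ_E(t) t^{n−k−1} dt)^{(d−k)/(n−k)}. -/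
/-!
Substituting `t = √(u + s²)` turns the left side into `½ ∫_B u^α du` and bounds the right-hand
integral below by `½ ∫_B u^β du`, with `α = (d-k)/2 - 1 ≤ β = (n-k-2)/2`. For such power weights,
cutting `B` at the level `m` with `m^(β+1) = ∫_B u^β` gives
`∫_B u^α ≤ m^(α+1)/(α+1) + m^(α-β) ∫_B u^β`, and both terms are constant multiples of
`(∫_B u^β)^((α+1)/(β+1))`.
-/

open MeasureTheory Set
open scoped ENNReal

theorem lintegral_Ioc_zero_rpow {α : ℝ} (hα : -1 < α) {m : ℝ} (hm : 0 ≤ m) :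
    ∫⁻ u in Ioc 0 m, ENNReal.ofReal (u ^ α) = ENNReal.ofReal (m ^ (α + 1) / (α + 1)) := by
  have hint : IntegrableOn (fun u : ℝ => u ^ α) (Ioc 0 m) :=
    (intervalIntegrable_iff_integrableOn_Ioc_of_le hm).mp
      (intervalIntegral.intervalIntegrable_rpow' hα)
  have hnonneg : 0 ≤ᵐ[volume.restrict (Ioc 0 m)] fun u : ℝ => u ^ α :=
    (ae_restrict_iff' measurableSet_Ioc).mpr
      (Filter.Eventually.of_forall fun u hu => Real.rpow_nonneg hu.1.le α)
  rw [← ofReal_integral_eq_lintegral_ofReal hint hnonneg, ← intervalIntegral.integral_of_le hm,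
    integral_rpow (Or.inl hα), Real.zero_rpow (by linarith), sub_zero]

theorem setLIntegral_rpow_le_add {α β : ℝ} (hα : -1 < α) (hαβ : α ≤ β) {B : Set ℝ}
    (hB : B ⊆ Ioi 0) {m : ℝ} (hm : 0 < m) :
    ∫⁻ u in B, ENNReal.ofReal (u ^ α) ≤
      ENNReal.ofReal (m ^ (α + 1) / (α + 1)) +
        ENNReal.ofReal (m ^ (α - β)) * ∫⁻ u in B, ENNReal.ofReal (u ^ β) := by
  have hsplit : B ⊆ Ioc 0 m ∪ (B ∩ Ioi m) := fun u hu =>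
    (le_or_gt u m).imp (fun h => ⟨hB hu, h⟩) (fun h => ⟨hu, h⟩)
  have hfar : ∀ u ∈ B ∩ Ioi m,
      ENNReal.ofReal (u ^ α) ≤ ENNReal.ofReal (m ^ (α - β)) * ENNReal.ofReal (u ^ β) := by
    rintro u ⟨-, hmu : m < u⟩
    have hu : 0 < u := hm.trans hmu
    rw [← ENNReal.ofReal_mul (Real.rpow_nonneg hm.le _)]
    refine ENNReal.ofReal_le_ofReal ?_
    calc u ^ α = u ^ (α - β) * u ^ β := by rw [← Real.rpow_add hu, sub_add_cancel]
      _ ≤ m ^ (α - β) * u ^ β := mul_le_mul_of_nonneg_right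
        (Real.rpow_le_rpow_of_nonpos hm hmu.le (by linarith)) (Real.rpow_nonneg hu.le _)
  have hmeas : Measurable fun u : ℝ => ENNReal.ofReal (u ^ β) :=
    (measurable_id.pow_const β).ennreal_ofReal
  calc ∫⁻ u in B, ENNReal.ofReal (u ^ α)
      ≤ ∫⁻ u in Ioc 0 m ∪ (B ∩ Ioi m), ENNReal.ofReal (u ^ α) := lintegral_mono_set hsplit
    _ ≤ (∫⁻ u in Ioc 0 m, ENNReal.ofReal (u ^ α)) + ∫⁻ u in B ∩ Ioi m, ENNReal.ofReal (u ^ α) :=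
      lintegral_union_le _ _ _
    _ ≤ ENNReal.ofReal (m ^ (α + 1) / (α + 1)) +
        ENNReal.ofReal (m ^ (α - β)) * ∫⁻ u in B ∩ Ioi m, ENNReal.ofReal (u ^ β) := by
      rw [lintegral_Ioc_zero_rpow hα hm.le, ← lintegral_const_mul _ hmeas]
      gcongr 1
      exact setLIntegral_mono (hmeas.const_mul _) hfar
    _ ≤ _ := by gcongr; exact inter_subset_left

theorem setLIntegral_rpow_le_mul_rpow {α β : ℝ} (hα : -1 < α) (hαβ : α ≤ β) {B : Set ℝ}
    (hB : MeasurableSet B) (hB0 : B ⊆ Ioi 0) :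
    ∫⁻ u in B, ENNReal.ofReal (u ^ α) ≤
      ENNReal.ofReal ((α + 1)⁻¹ + 1) *
        (∫⁻ u in B, ENNReal.ofReal (u ^ β)) ^ ((α + 1) / (β + 1)) := by
  set M := ∫⁻ u in B, ENNReal.ofReal (u ^ β)
  have hα1 : 0 < α + 1 := by linarith
  have hC : 0 < (α + 1)⁻¹ + 1 := by positivity
  rcases eq_or_ne M 0 with hM0 | hM0
  · have hnull : volume.restrict B = 0 := by
      have hzero : ∀ᵐ u ∂volume.restrict B, ENNReal.ofReal (u ^ β) = 0 :=
        (lintegral_eq_zero_iff (measurable_id.pow_const β).ennreal_ofReal).mp hM0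
      rw [← ae_eq_bot, ← Filter.eventually_false_iff_eq_bot]
      filter_upwards [hzero, ae_restrict_mem hB] with u hu huB
      exact (ENNReal.ofReal_pos.mpr (Real.rpow_pos_of_pos (hB0 huB) β)).ne' hu
    simp [hnull]
  rcases eq_or_ne M ⊤ with hMtop | hMtop
  · rw [hMtop, ENNReal.top_rpow_of_pos (div_pos hα1 (by linarith)),
      ENNReal.mul_top (by positivity)]
    exact le_top
  obtain ⟨X, hX, hMX⟩ : ∃ X : ℝ, 0 < X ∧ M = ENNReal.ofReal X :=
    ⟨M.toReal, ENNReal.toReal_pos hM0 hMtop, (ENNReal.ofReal_toReal hMtop).symm⟩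
  have hβ1 : β + 1 ≠ 0 := by linarith
  set m := X ^ (β + 1)⁻¹
  have hfirst : m ^ (α + 1) = X ^ ((α + 1) / (β + 1)) := by
    rw [← Real.rpow_mul hX.le, inv_mul_eq_div]
  have hsecond : m ^ (α - β) * X = X ^ ((α + 1) / (β + 1)) := by
    rw [← Real.rpow_mul hX.le, ← Real.rpow_add_one hX.ne']
    congr 1
    field_simp
    ring
  calc ∫⁻ u in B, ENNReal.ofReal (u ^ α)
      ≤ ENNReal.ofReal (m ^ (α + 1) / (α + 1)) + ENNReal.ofReal (m ^ (α - β)) * M :=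
        setLIntegral_rpow_le_add hα hαβ hB0 (Real.rpow_pos_of_pos hX _)
    _ = ENNReal.ofReal ((α + 1)⁻¹ + 1) * M ^ ((α + 1) / (β + 1)) := by
      rw [hMX, ← ENNReal.ofReal_mul (by positivity), hfirst, hsecond,
        ← ENNReal.ofReal_add (by positivity) (by positivity),
        ENNReal.ofReal_rpow_of_pos hX, ← ENNReal.ofReal_mul hC.le]
      congr 1
      ring

theorem image_sqrt_add_sq_Ioi_zero {s : ℝ} (hs : 0 ≤ s) :
    (fun u => √(u + s ^ 2)) '' Ioi 0 = Ioi s := by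
  ext t
  constructor
  · rintro ⟨u, hu : 0 < u, rfl⟩
    show s < √(u + s ^ 2)
    exact Real.lt_sqrt_of_sq_lt (by linarith)
  · intro (hst : s < t)
    have ht : 0 < t := hs.trans_lt hst
    refine ⟨t ^ 2 - s ^ 2, show 0 < t ^ 2 - s ^ 2 by nlinarith, ?_⟩
    simp only [sub_add_cancel, Real.sqrt_sq ht.le]

theorem setLIntegral_inter_Ioi_eq_sqrt_add_sq {s : ℝ} (hs : 0 ≤ s) {E : Set ℝ}
    (hE : MeasurableSet E) (F : ℝ → ℝ≥0∞) :
    ∫⁻ t in E ∩ Ioi s, F t =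
      ∫⁻ u in (fun u => √(u + s ^ 2)) ⁻¹' E ∩ Ioi 0,
        ENNReal.ofReal (1 / (2 * √(u + s ^ 2))) * F √(u + s ^ 2) := by
  set φ : ℝ → ℝ := fun u => √(u + s ^ 2)
  have hpos : ∀ u ∈ Ioi (0 : ℝ), 0 < u + s ^ 2 := fun u (hu : 0 < u) => by positivity
  have hmeas : MeasurableSet (φ ⁻¹' E ∩ Ioi 0) :=
    (hE.preimage (by fun_prop)).inter measurableSet_Ioi
  have hderiv : ∀ u ∈ φ ⁻¹' E ∩ Ioi 0,
      HasDerivWithinAt φ (1 / (2 * √(u + s ^ 2))) (φ ⁻¹' E ∩ Ioi 0) u := fun u hu =>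
    (((hasDerivAt_id u).add_const (s ^ 2)).sqrt (hpos u hu.2).ne').hasDerivWithinAt.congr_deriv
      (by simp)
  have hinj : InjOn φ (φ ⁻¹' E ∩ Ioi 0) := fun u hu v hv huv => by
    have := (Real.sqrt_inj (hpos u hu.2).le (hpos v hv.2).le).mp huv
    linarith
  rw [← image_sqrt_add_sq_Ioi_zero hs, ← image_preimage_inter,
    lintegral_image_eq_lintegral_abs_deriv_mul hmeas hderiv hinj]
  refine setLIntegral_congr_fun hmeas fun u hu => ?_
  rw [abs_of_nonneg (by positivity)]

theorem ofReal_mul_abel_weight_sqrt_add_sq {u : ℝ} (hu : 0 < u) (s α : ℝ) :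
    ENNReal.ofReal (1 / (2 * √(u + s ^ 2))) *
        ENNReal.ofReal ((√(u + s ^ 2) ^ 2 - s ^ 2) ^ α * √(u + s ^ 2)) =
      2⁻¹ * ENNReal.ofReal (u ^ α) := by
  have hr : 0 < √(u + s ^ 2) := Real.sqrt_pos.mpr (by positivity)
  rw [Real.sq_sqrt (by positivity), add_sub_cancel_right, ← ENNReal.ofReal_mul (by positivity),
    ← ENNReal.ofReal_ofNat 2, ← ENNReal.ofReal_inv_of_pos two_pos,
    ← ENNReal.ofReal_mul (by norm_num)]
  congr 1
  field_simp

theorem ofReal_rpow_half_le_mul_sqrt_add_sq_pow {u : ℝ} (hu : 0 < u) (s : ℝ) (p : ℕ) :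
    2⁻¹ * ENNReal.ofReal (u ^ ((p : ℝ) / 2)) ≤
      ENNReal.ofReal (1 / (2 * √(u + s ^ 2))) * ENNReal.ofReal (√(u + s ^ 2) ^ (p + 1)) := by
  have hr : 0 < √(u + s ^ 2) := Real.sqrt_pos.mpr (by positivity)
  have hpow : u ^ ((p : ℝ) / 2) ≤ √(u + s ^ 2) ^ p := by
    rw [div_eq_inv_mul, Real.rpow_mul hu.le, ← one_div, ← Real.sqrt_eq_rpow, Real.rpow_natCast]
    gcongr
    linarith [sq_nonneg s]
  rw [← ENNReal.ofReal_mul (by positivity), ← ENNReal.ofReal_ofNat 2,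
    ← ENNReal.ofReal_inv_of_pos two_pos, ← ENNReal.ofReal_mul (by norm_num)]
  refine ENNReal.ofReal_le_ofReal ?_
  calc 2⁻¹ * u ^ ((p : ℝ) / 2) ≤ 2⁻¹ * √(u + s ^ 2) ^ p := by gcongr
    _ = 1 / (2 * √(u + s ^ 2)) * √(u + s ^ 2) ^ (p + 1) := by
      field_simp
      ring

theorem setLIntegral_abel_weight_le {α : ℝ} {p : ℕ} (hα : -1 < α) (hαp : α ≤ (p : ℝ) / 2)
    {s : ℝ} (hs : 0 ≤ s) {E : Set ℝ} (hE : MeasurableSet E) :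
    ∫⁻ t in E ∩ Ioi s, ENNReal.ofReal ((t ^ 2 - s ^ 2) ^ α * t) ≤
      ENNReal.ofReal ((α + 1)⁻¹ + 1) *
        (∫⁻ t in E ∩ Ioi s, ENNReal.ofReal (t ^ (p + 1))) ^ ((α + 1) / ((p : ℝ) / 2 + 1)) := by
  set θ := (α + 1) / ((p : ℝ) / 2 + 1)
  have hθ0 : 0 ≤ θ := div_nonneg (by linarith) (by positivity)
  have hθ1 : θ ≤ 1 := by
    rw [div_le_one (by positivity)]
    linarith
  set B := (fun u => √(u + s ^ 2)) ⁻¹' E ∩ Ioi 0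
  have hB : MeasurableSet B := (hE.preimage (by fun_prop)).inter measurableSet_Ioi
  rw [setLIntegral_inter_Ioi_eq_sqrt_add_sq hs hE, setLIntegral_inter_Ioi_eq_sqrt_add_sq hs hE,
    setLIntegral_congr_fun hB fun u hu => ofReal_mul_abel_weight_sqrt_add_sq hu.2 s α,
    lintegral_const_mul' _ _ (by norm_num)]
  calc 2⁻¹ * ∫⁻ u in B, ENNReal.ofReal (u ^ α)
      ≤ 2⁻¹ * (ENNReal.ofReal ((α + 1)⁻¹ + 1) *
          (∫⁻ u in B, ENNReal.ofReal (u ^ ((p : ℝ) / 2))) ^ θ) := by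
        gcongr
        exact setLIntegral_rpow_le_mul_rpow hα hαp hB inter_subset_right
    _ ≤ ENNReal.ofReal ((α + 1)⁻¹ + 1) *
          (2⁻¹ * ∫⁻ u in B, ENNReal.ofReal (u ^ ((p : ℝ) / 2))) ^ θ := by
        -- the Jacobian factor `½` is absorbed since `θ ≤ 1`
        rw [ENNReal.mul_rpow_of_nonneg _ _ hθ0, mul_left_comm]
        gcongr
        simpa using ENNReal.rpow_le_rpow_of_exponent_ge (x := 2⁻¹) (by norm_num) hθ1
    _ ≤ _ := by
        rw [← lintegral_const_mul' _ _ (by norm_num)]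
        gcongr _ * ?_ ^ _
        exact setLIntegral_mono' hB fun u hu => ofReal_rpow_half_le_mul_sqrt_add_sq_pow hu.2 s p

/-- Endpoint estimate on indicators for the Abel-type transform associated with the
`d`-plane transform of radial functions on the affine Grassmannian `G(n,k)`:
for `n > d > k ≥ 0` there is `C > 0` such that for every measurable `E ⊆ (0,∞)` and `s > 0`,
`∫_s^∞ χ_E(t) (t² − s²)^{((d−k)/2) − 1} t dt ≤ C (∫_s^∞ χ_E(t) t^{n−k−1} dt)^{(d−k)/(n−k)}`. -/
theorem abel_grassmannian_indicator_endpoint (n d k : ℕ) (hkd : k < d) (hdn : d < n) :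
    ∃ C : ℝ, 0 < C ∧ ∀ E : Set ℝ, MeasurableSet E → E ⊆ Set.Ioi 0 →
      ∀ s : ℝ, 0 < s →
        (∫⁻ t in E ∩ Set.Ioi s,
            ENNReal.ofReal ((t ^ 2 - s ^ 2) ^ (((d : ℝ) - k) / 2 - 1) * t)) ≤
          ENNReal.ofReal C *
            (∫⁻ t in E ∩ Set.Ioi s, ENNReal.ofReal (t ^ (n - k - 1)))
              ^ (((d : ℝ) - k) / ((n : ℝ) - k)) := by
  obtain ⟨p, hp⟩ : ∃ p : ℕ, n = k + p + 2 := ⟨n - k - 2, by omega⟩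
  have hkd' : (k : ℝ) + 1 ≤ d := by exact_mod_cast hkd
  have hdn' : (d : ℝ) ≤ k + p + 2 := by exact_mod_cast (show d ≤ k + p + 2 by omega)
  have hexp : ((d : ℝ) - k) / ((n : ℝ) - k) = (((d : ℝ) - k) / 2 - 1 + 1) / ((p : ℝ) / 2 + 1) := by
    rw [sub_add_cancel, div_div, hp,
      show ((k + p + 2 : ℕ) : ℝ) - k = 2 * ((p : ℝ) / 2 + 1) by push_cast; ring]
  rw [show n - k - 1 = p + 1 by omega, hexp]
  exact ⟨(((d : ℝ) - k) / 2 - 1 + 1)⁻¹ + 1, add_pos (inv_pos.mpr (by linarith)) one_pos,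
    fun E hE _ s hs => setLIntegral_abel_weight_le (by linarith) (by linarith) hs.le hE⟩
end

section
/- Let n > d > k ≥ 0 be integers. There exists a constant C > 0 such that for every measurable function f : (0,∞) → [0,∞], sup_{s>0} ∫_s^∞ f(t) (t² − s²)^{((d−k)/2) − 1} t dt ≤ C ‖f‖_{L^{(n−k)/(d−k),1}((0,∞), t^{n−k−1} dt)}. -/
/-!
Layer-cake decomposition reduces the estimate to indicator functions: with `a = d - k`,
`b = n - k` and `μ = t^(b-1) dt` on `(0, ∞)`, it suffices that
`∫_{E ∩ (s, ∞)} (t² - s²)^(a/2-1) t dt ≤ C μ(E)^(a/b)` for every set `E`.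
Split at `r = √(s² + ρ²)`. On `(s, r]` the kernel integrates exactly to `ρ^a / a`. Beyond `r`,
writing `u = t² - s² ∈ [ρ², t²]`, the kernel `u^(a/2-1) t = u^((a-b)/2) u^((b-2)/2) t` is at most
`ρ^(a-b) t^(b-1)`, which contributes `ρ^(a-b) μ(E)`. The choice `ρ = μ(E)^(1/b)` balances the
two terms.
-/

open MeasureTheory Set
open scoped ENNReal

/-- The Lorentz `L^{p,1}` norm of `f` with respect to the measure `μ`:
`‖f‖_{L^{p,1}(μ)} = p ∫_0^∞ μ({x : f x > λ})^{1/p} dλ`. -/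
noncomputable def lorentzNorm (μ : Measure ℝ) (p : ℝ) (f : ℝ → ℝ≥0∞) : ℝ≥0∞ :=
  ENNReal.ofReal p *
    ∫⁻ l in Set.Ioi (0 : ℝ), (μ {t | ENNReal.ofReal l < f t}) ^ (1 / p)

theorem setLIntegral_Ioi_ite_ofReal_lt (c x : ℝ≥0∞) :
    ∫⁻ l in Ioi (0 : ℝ), (if ENNReal.ofReal l < c then x else 0) = c * x := by
  have hS : MeasurableSet {l : ℝ | ENNReal.ofReal l < c} :=
    measurableSet_lt ENNReal.measurable_ofReal measurable_const
  have hvol : volume ({l : ℝ | ENNReal.ofReal l < c} ∩ Ioi 0) = c := by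
    rcases eq_or_ne c ⊤ with rfl | hc
    · simp [ENNReal.ofReal_lt_top]
    · have : {l : ℝ | ENNReal.ofReal l < c} ∩ Ioi 0 = Ioo 0 c.toReal := by
        ext l
        simp only [mem_inter_iff, mem_ofPred_eq, mem_Ioi, mem_Ioo]
        exact ⟨fun h => ⟨h.2, (ENNReal.ofReal_lt_iff_lt_toReal h.2.le hc).1 h.1⟩,
          fun h => ⟨(ENNReal.ofReal_lt_iff_lt_toReal h.1.le hc).2 h.2, h.1⟩⟩
      simp [this, ENNReal.ofReal_toReal hc]
  have hite : (fun l : ℝ => if ENNReal.ofReal l < c then x else 0)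
      = {l : ℝ | ENNReal.ofReal l < c}.indicator fun _ => x := by
    ext l; simp [indicator_apply]
  rw [hite, lintegral_indicator_const hS, Measure.restrict_apply hS, hvol, mul_comm]

theorem lintegral_mul_eq_lintegral_setLIntegral_lt {α : Type*} [MeasurableSpace α]
    {μ : Measure α} [SFinite μ] {f g : α → ℝ≥0∞} (hf : Measurable f) (hg : Measurable g) :
    ∫⁻ x, f x * g x ∂μ = ∫⁻ l in Ioi (0 : ℝ), ∫⁻ x in {x | ENNReal.ofReal l < f x}, g x ∂μ := by
  calc ∫⁻ x, f x * g x ∂μ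
      = ∫⁻ x, (∫⁻ l in Ioi (0 : ℝ), (if ENNReal.ofReal l < f x then g x else 0)) ∂μ := by
        simp only [setLIntegral_Ioi_ite_ofReal_lt]
    _ = ∫⁻ l in Ioi (0 : ℝ), ∫⁻ x, (if ENNReal.ofReal l < f x then g x else 0) ∂μ := by
        refine lintegral_lintegral_swap (Measurable.aemeasurable ?_)
        exact Measurable.ite (measurableSet_lt (by fun_prop) (by fun_prop)) (by fun_prop)
          measurable_const
    _ = _ := by
        congr 1 with l
        rw [← lintegral_indicator (measurableSet_lt measurable_const hf)]
        simp only [indicator_apply, mem_ofPred_eq]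

noncomputable def abelKernel (a s t : ℝ) : ℝ := (t ^ 2 - s ^ 2) ^ (a / 2 - 1) * t

theorem abelKernel_nonneg {a s t : ℝ} (hs : 0 ≤ s) (hst : s ≤ t) : 0 ≤ abelKernel a s t :=
  mul_nonneg (Real.rpow_nonneg (by nlinarith) _) (hs.trans hst)

theorem measurable_abelKernel (a s : ℝ) : Measurable (abelKernel a s) := by
  unfold abelKernel
  fun_prop

theorem hasDerivAt_sq_sub_sq_rpow_div {a s t : ℝ} (ha : a ≠ 0) (hst : s ^ 2 < t ^ 2) :
    HasDerivAt (fun t => (t ^ 2 - s ^ 2) ^ (a / 2) / a) (abelKernel a s t) t := by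
  have h := (((hasDerivAt_pow 2 t).sub_const (s ^ 2)).rpow_const
    (p := a / 2) (Or.inl (sub_pos.2 hst).ne')).div_const a
  refine h.congr_deriv ?_
  simp only [abelKernel, Nat.cast_ofNat]
  field_simp
  ring

theorem lintegral_Ioc_abelKernel {a s r : ℝ} (ha : 0 < a) (hs : 0 ≤ s) (hsr : s ≤ r) :
    ∫⁻ t in Ioc s r, ENNReal.ofReal (abelKernel a s t) =
      ENNReal.ofReal ((r ^ 2 - s ^ 2) ^ (a / 2) / a) := by
  set g : ℝ → ℝ := fun t => (t ^ 2 - s ^ 2) ^ (a / 2) / a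
  have hcont : ContinuousOn g (Icc s r) := by
    refine ContinuousOn.div_const (fun t _ => ?_) a
    exact ((continuous_pow 2).sub continuous_const).continuousAt.rpow_const
      (Or.inr (by positivity)) |>.continuousWithinAt
  have hderiv : ∀ t ∈ Ioo s r, HasDerivAt g (abelKernel a s t) t := fun t ht =>
    hasDerivAt_sq_sub_sq_rpow_div ha.ne' (by nlinarith [ht.1])
  have hint := intervalIntegral.integrableOn_deriv_of_nonneg hcont hderiv
    fun t ht => abelKernel_nonneg hs ht.1.le
  rw [← ofReal_integral_eq_lintegral_ofReal hint, ← intervalIntegral.integral_of_le hsr,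
    intervalIntegral.integral_eq_sub_of_hasDerivAt_of_le hsr hcont hderiv
      ((intervalIntegrable_iff_integrableOn_Ioc_of_le hsr).2 hint)]
  · simp [g, Real.zero_rpow (by positivity : a / 2 ≠ 0)]
  · filter_upwards [ae_restrict_mem measurableSet_Ioc] with t ht
    exact abelKernel_nonneg hs ht.1.le

theorem abelKernel_le_mul_rpow {a b s t : ℝ} (hb : 2 ≤ b) (hs : 0 ≤ s) (hst : s < t) :
    abelKernel a s t ≤ (t ^ 2 - s ^ 2) ^ ((a - b) / 2) * t ^ (b - 1) := by
  have ht : 0 < t := hs.trans_lt hst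
  have hu : 0 < t ^ 2 - s ^ 2 := by nlinarith
  have hsq : (t ^ 2) ^ ((b - 2) / 2) * t = t ^ (b - 1) := by
    rw [Real.rpow_div_two_eq_sqrt _ (sq_nonneg t), Real.sqrt_sq ht.le, ← Real.rpow_add_one ht.ne']
    ring_nf
  calc abelKernel a s t
      = (t ^ 2 - s ^ 2) ^ ((a - b) / 2) * (t ^ 2 - s ^ 2) ^ ((b - 2) / 2) * t := by
        rw [abelKernel, ← Real.rpow_add hu]
        ring_nf
    _ ≤ (t ^ 2 - s ^ 2) ^ ((a - b) / 2) * (t ^ 2) ^ ((b - 2) / 2) * t := by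
        gcongr
        nlinarith
    _ = (t ^ 2 - s ^ 2) ^ ((a - b) / 2) * t ^ (b - 1) := by
        rw [mul_assoc, hsq]

noncomputable def radialMeasure (b : ℝ) : Measure ℝ :=
  (volume.restrict (Ioi 0)).withDensity fun t => ENNReal.ofReal (t ^ (b - 1))

theorem setLIntegral_abelKernel_le_add {a b s ρ : ℝ} (ha : 0 < a) (hab : a ≤ b) (hb : 2 ≤ b)
    (hs : 0 ≤ s) (hρ : 0 < ρ) (E : Set ℝ) :
    ∫⁻ t in E ∩ Ioi s, ENNReal.ofReal (abelKernel a s t) ≤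
      ENNReal.ofReal (ρ ^ a / a) + ENNReal.ofReal (ρ ^ (a - b)) * radialMeasure b E := by
  set r := √(s ^ 2 + ρ ^ 2)
  have hr : r ^ 2 - s ^ 2 = ρ ^ 2 := by
    simp [r, Real.sq_sqrt (by positivity : 0 ≤ s ^ 2 + ρ ^ 2)]
  have hsr : s < r := Real.lt_sqrt hs |>.2 (by nlinarith)
  have hnear :
      ∫⁻ t in Ioc s r, ENNReal.ofReal (abelKernel a s t) ≤ ENNReal.ofReal (ρ ^ a / a) := by
    rw [lintegral_Ioc_abelKernel ha hs hsr.le, hr, Real.rpow_div_two_eq_sqrt _ (sq_nonneg ρ),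
      Real.sqrt_sq hρ.le]
  have hfar : ∫⁻ t in E ∩ Ioi r, ENNReal.ofReal (abelKernel a s t) ≤
      ENNReal.ofReal (ρ ^ (a - b)) * radialMeasure b E := by
    calc ∫⁻ t in E ∩ Ioi r, ENNReal.ofReal (abelKernel a s t)
        ≤ ∫⁻ t in E ∩ Ioi r, ENNReal.ofReal (ρ ^ (a - b)) * ENNReal.ofReal (t ^ (b - 1)) := by
          refine setLIntegral_mono (by fun_prop) fun t ht => ?_
          have hrt : r < t := ht.2
          have hst : s < t := hsr.trans hrt
          have ht0 : 0 < t := hs.trans_lt hst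
          have hrt2 : r ^ 2 < t ^ 2 := by nlinarith
          rw [← ENNReal.ofReal_mul (by positivity)]
          refine ENNReal.ofReal_le_ofReal ((abelKernel_le_mul_rpow hb hs hst).trans ?_)
          refine mul_le_mul_of_nonneg_right ?_ (by positivity)
          calc (t ^ 2 - s ^ 2) ^ ((a - b) / 2) ≤ (ρ ^ 2) ^ ((a - b) / 2) :=
                Real.rpow_le_rpow_of_nonpos (by positivity) (by linarith) (by linarith)
            _ = ρ ^ (a - b) := by
                rw [Real.rpow_div_two_eq_sqrt _ (sq_nonneg ρ), Real.sqrt_sq hρ.le]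
      _ = ENNReal.ofReal (ρ ^ (a - b)) * ∫⁻ t in E ∩ Ioi r, ENNReal.ofReal (t ^ (b - 1)) :=
          lintegral_const_mul _ (by fun_prop)
      _ ≤ ENNReal.ofReal (ρ ^ (a - b)) *
            ∫⁻ t in E, ENNReal.ofReal (t ^ (b - 1)) ∂(volume.restrict (Ioi 0)) := by
          rw [Measure.restrict_restrict' measurableSet_Ioi]
          exact mul_le_mul_right (lintegral_mono_set
            (inter_subset_inter_right _ (Ioi_subset_Ioi (hs.trans hsr.le)))) _
      _ ≤ _ := mul_le_mul_right (withDensity_apply_le _ _) _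
  calc ∫⁻ t in E ∩ Ioi s, ENNReal.ofReal (abelKernel a s t)
      ≤ ∫⁻ t in Ioc s r ∪ (E ∩ Ioi r), ENNReal.ofReal (abelKernel a s t) := by
        refine lintegral_mono_set fun t ht => ?_
        rcases le_or_gt t r with htr | htr
        · exact Or.inl ⟨ht.2, htr⟩
        · exact Or.inr ⟨ht.1, htr⟩
    _ ≤ (∫⁻ t in Ioc s r, ENNReal.ofReal (abelKernel a s t)) +
          ∫⁻ t in E ∩ Ioi r, ENNReal.ofReal (abelKernel a s t) := lintegral_union_le _ _ _
    _ ≤ _ := add_le_add hnear hfar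

open Filter Topology in
theorem setLIntegral_abelKernel_le_rpow {a b s : ℝ} (ha : 0 < a) (hab : a ≤ b) (hb : 2 ≤ b)
    (hs : 0 ≤ s) (E : Set ℝ) :
    ∫⁻ t in E ∩ Ioi s, ENNReal.ofReal (abelKernel a s t) ≤
      ENNReal.ofReal ((a + 1) / a) * radialMeasure b E ^ (a / b) := by
  have hab0 : 0 < a / b := div_pos ha (by linarith)
  rcases eq_or_ne (radialMeasure b E) ⊤ with hE | hE
  · rw [hE, ENNReal.top_rpow_of_pos hab0, ENNReal.mul_top (by positivity)]
    exact le_top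
  rcases eq_or_ne (radialMeasure b E) 0 with hE0 | hE0
  · have hρ : ∀ ρ > 0, ∫⁻ t in E ∩ Ioi s, ENNReal.ofReal (abelKernel a s t) ≤
        ENNReal.ofReal (ρ ^ a / a) := fun ρ hρ => by
      simpa [hE0] using setLIntegral_abelKernel_le_add ha hab hb hs hρ E
    have hlim : Tendsto (fun ρ : ℝ => ENNReal.ofReal (ρ ^ a / a)) (𝓝[>] 0) (𝓝 0) := by
      have hcont : Continuous fun ρ : ℝ => ENNReal.ofReal (ρ ^ a / a) :=
        ENNReal.continuous_ofReal.comp ((Real.continuous_rpow_const ha.le).div_const a)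
      simpa [Real.zero_rpow ha.ne'] using (hcont.tendsto 0).mono_left nhdsWithin_le_nhds
    rw [hE0, ENNReal.zero_rpow_of_pos hab0, mul_zero]
    exact ge_of_tendsto hlim (eventually_nhdsWithin_of_forall hρ)
  set M := (radialMeasure b E).toReal
  have hM : 0 < M := ENNReal.toReal_pos hE0 hE
  refine (setLIntegral_abelKernel_le_add ha hab hb hs (Real.rpow_pos_of_pos hM (1 / b)) E).trans
    (le_of_eq ?_)
  have hopt : (M ^ (1 / b)) ^ a / a + (M ^ (1 / b)) ^ (a - b) * M = (a + 1) / a * M ^ (a / b) := by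
    rw [← Real.rpow_mul hM.le, ← Real.rpow_mul hM.le, ← Real.rpow_add_one hM.ne']
    field_simp
    ring_nf
  rw [← ENNReal.ofReal_toReal hE, ENNReal.ofReal_rpow_of_pos hM,
    ← ENNReal.ofReal_mul (by positivity), ← ENNReal.ofReal_add (by positivity) (by positivity),
    ← ENNReal.ofReal_mul (by positivity), hopt]

theorem setLIntegral_mul_abelKernel_le_lorentzNorm {a b s : ℝ} (ha : 0 < a) (hab : a ≤ b)
    (hb : 2 ≤ b) (hs : 0 ≤ s) {f : ℝ → ℝ≥0∞} (hf : Measurable f) :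
    ∫⁻ t in Ioi s, f t * ENNReal.ofReal (abelKernel a s t) ≤
      ENNReal.ofReal ((a + 1) / b) * lorentzNorm (radialMeasure b) (b / a) f := by
  calc ∫⁻ t in Ioi s, f t * ENNReal.ofReal (abelKernel a s t)
      = ∫⁻ l in Ioi (0 : ℝ), ∫⁻ t in {t | ENNReal.ofReal l < f t} ∩ Ioi s,
          ENNReal.ofReal (abelKernel a s t) := by
        rw [lintegral_mul_eq_lintegral_setLIntegral_lt hf
          (measurable_abelKernel a s).ennreal_ofReal]
        simp only [Measure.restrict_restrict (measurableSet_lt measurable_const hf)]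
    _ ≤ ∫⁻ l in Ioi (0 : ℝ), ENNReal.ofReal ((a + 1) / a) *
          radialMeasure b {t | ENNReal.ofReal l < f t} ^ (a / b) :=
        lintegral_mono fun l => setLIntegral_abelKernel_le_rpow ha hab hb hs _
    _ = ENNReal.ofReal ((a + 1) / a) *
          ∫⁻ l in Ioi (0 : ℝ), radialMeasure b {t | ENNReal.ofReal l < f t} ^ (a / b) :=
        lintegral_const_mul' _ _ ENNReal.ofReal_ne_top
    _ = ENNReal.ofReal ((a + 1) / b) * lorentzNorm (radialMeasure b) (b / a) f := by
        have hb0 : 0 < b := by linarith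
        rw [lorentzNorm, one_div_div, ← mul_assoc, ← ENNReal.ofReal_mul (by positivity)]
        congr 3
        field_simp

/-- Endpoint estimate for the Abel-type transform associated with the `d`-plane
transform of radial functions on the affine Grassmannian `G(n,k)`: for `n > d > k ≥ 0`
there is `C > 0` such that for all measurable `f : (0,∞) → [0,∞]`,
`sup_{s>0} ∫_s^∞ f(t)(t² − s²)^{((d−k)/2)−1} t dt ≤ C ‖f‖_{L^{(n−k)/(d−k),1}((0,∞), t^{n−k−1} dt)}`. -/
theorem abel_grassmannian_endpoint (n d k : ℕ) (hkd : k < d) (hdn : d < n) :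
    ∃ C : ℝ, 0 < C ∧ ∀ f : ℝ → ℝ≥0∞, Measurable f →
      ∀ s : ℝ, 0 < s →
        (∫⁻ t in Set.Ioi s,
            f t * ENNReal.ofReal ((t ^ 2 - s ^ 2) ^ (((d : ℝ) - k) / 2 - 1) * t)) ≤
          ENNReal.ofReal C *
            lorentzNorm
              ((volume.restrict (Set.Ioi (0 : ℝ))).withDensity
                (fun t => ENNReal.ofReal (t ^ (n - k - 1))))
              (((n : ℝ) - k) / ((d : ℝ) - k)) f := by
  have hk1d : (k : ℝ) + 1 ≤ d := by exact_mod_cast hkd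
  have hd1n : (d : ℝ) + 1 ≤ n := by exact_mod_cast hdn
  have hdensity : (fun t : ℝ => ENNReal.ofReal (t ^ (n - k - 1))) =
      fun t => ENNReal.ofReal (t ^ ((n : ℝ) - k - 1)) := by
    have hcast : ((n - k - 1 : ℕ) : ℝ) = (n : ℝ) - k - 1 := by
      rw [Nat.sub_sub, Nat.cast_sub (by omega)]
      push_cast
      ring
    simp only [← hcast, Real.rpow_natCast]
  refine ⟨((d - k : ℝ) + 1) / (n - k), by apply div_pos <;> linarith, fun f hf s hs => ?_⟩
  rw [hdensity]
  exact setLIntegral_mul_abelKernel_le_lorentzNorm (by linarith) (by linarith) (by linarith)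
    hs.le hf
end

section
/- Let δ ≠ 0 be a real number and let p ∈ [1,∞). There exists a constant C > 0 (depending only on δ and p) such that for every measurable set E ⊆ ℝ, ∫_ℝ χ_E(t) e^{δt} dt ≤ C (∫_ℝ χ_E(t) e^{pδt} dt)^{1/p}. -/
open MeasureTheory Set Real
open scoped ENNReal

/-!
Cut `E` at the level `e^{δt} = a`. The part of `E` below the level lies in a half-line, on
which `∫ e^{δt} dt = a / |δ|`; above the level `e^{δt} ≤ a^{1-p} e^{pδt}`. Hence
`∫_E e^{δt} ≤ a / |δ| + a^{1-p} V` with `V = ∫_E e^{pδt}`, and the choice `a = V^{1/p}` gives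
the bound with `C = 1 / |δ| + 1`.
-/

lemma le_rpow_mul_rpow_of_le {a x p : ℝ} (ha : 0 < a) (hax : a ≤ x) (hp : 1 ≤ p) :
    x ≤ a ^ (1 - p) * x ^ p := by
  have hx : 0 < x := ha.trans_le hax
  calc x = x ^ (1 - p) * x ^ p := by rw [← rpow_add hx, sub_add_cancel, rpow_one]
    _ ≤ a ^ (1 - p) * x ^ p :=
      mul_le_mul_of_nonneg_right (rpow_le_rpow_of_nonpos ha hax (by linarith))
        (rpow_nonneg hx.le p)

section MeasureSpace

variable {α : Type*} [MeasurableSpace α] {μ : Measure α}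

lemma setLIntegral_le_setLIntegral_add_rpow {f : α → ℝ} {S E : Set α} (hS : MeasurableSet S)
    (hE : MeasurableSet E) {a p : ℝ} (ha : 0 < a) (hp : 1 ≤ p) (hfa : ∀ x ∉ S, a ≤ f x) :
    ∫⁻ x in E, ENNReal.ofReal (f x) ∂μ ≤
      ∫⁻ x in S, ENNReal.ofReal (f x) ∂μ +
        ENNReal.ofReal (a ^ (1 - p)) * ∫⁻ x in E, ENNReal.ofReal (f x ^ p) ∂μ := by
  rw [← lintegral_inter_add_sdiff _ E hS]
  gcongr ?_ + ?_
  · exact lintegral_mono_set inter_subset_right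
  · calc ∫⁻ x in E \ S, ENNReal.ofReal (f x) ∂μ
        ≤ ∫⁻ x in E \ S, ENNReal.ofReal (a ^ (1 - p)) * ENNReal.ofReal (f x ^ p) ∂μ := by
          refine setLIntegral_mono' (hE.diff hS) fun x hx => ?_
          rw [← ENNReal.ofReal_mul (rpow_nonneg ha.le _)]
          exact ENNReal.ofReal_le_ofReal (le_rpow_mul_rpow_of_le ha (hfa x hx.2) hp)
      _ ≤ _ := by
        rw [lintegral_const_mul' _ _ ENNReal.ofReal_ne_top]
        gcongr
        exact sdiff_subset

lemma measure_eq_zero_of_setLIntegral_eq_zero {g : α → ℝ≥0∞} (hg : Measurable g)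
    (hg_ne_zero : ∀ x, g x ≠ 0) {E : Set α} (h : ∫⁻ x in E, g x ∂μ = 0) : μ E = 0 := by
  simpa [Function.support, hg_ne_zero] using (setLIntegral_pos_iff hg).not.mp h.not_gt

end MeasureSpace

lemma lintegral_exp_mul_setOf_mul_le {δ : ℝ} (hδ : δ ≠ 0) (c : ℝ) :
    ∫⁻ t in {t | δ * t ≤ c}, ENNReal.ofReal (exp (δ * t)) = ENNReal.ofReal (exp c / |δ|) := by
  have hexp_nonneg {s : Set ℝ} : ∀ᵐ t ∂volume.restrict s, 0 ≤ exp (δ * t) :=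
    ae_of_all _ fun t => (exp_pos _).le
  rcases hδ.lt_or_gt with hneg | hpos
  · have hset : {t | δ * t ≤ c} = Ici (c / δ) := by
      ext t; simp [div_le_iff_of_neg' hneg]
    rw [hset, Measure.restrict_congr_set Ioi_ae_eq_Ici.symm,
      ← ofReal_integral_eq_lintegral_ofReal (integrableOn_exp_mul_Ioi hneg _) hexp_nonneg,
      integral_exp_mul_Ioi hneg, mul_div_cancel₀ _ hδ, abs_of_neg hneg, div_neg, neg_div]
  · have hset : {t | δ * t ≤ c} = Iic (c / δ) := by
      ext t; simp [le_div_iff₀' hpos]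
    rw [hset, ← ofReal_integral_eq_lintegral_ofReal (integrableOn_exp_mul_Iic hpos _)
      hexp_nonneg, integral_exp_mul_Iic hpos, mul_div_cancel₀ _ hδ, abs_of_pos hpos]

lemma setLIntegral_exp_mul_le {δ : ℝ} (hδ : δ ≠ 0) {p : ℝ} (hp : 1 ≤ p) {E : Set ℝ}
    (hE : MeasurableSet E) {a : ℝ} (ha : 0 < a) :
    ∫⁻ t in E, ENNReal.ofReal (exp (δ * t)) ≤
      ENNReal.ofReal (a / |δ|) +
        ENNReal.ofReal (a ^ (1 - p)) * ∫⁻ t in E, ENNReal.ofReal (exp (p * δ * t)) := by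
  have hpow (t : ℝ) : exp (δ * t) ^ p = exp (p * δ * t) := by rw [← exp_mul]; ring_nf
  have hsplit := setLIntegral_le_setLIntegral_add_rpow (μ := volume)
    (f := fun t => exp (δ * t)) (S := {t | δ * t ≤ log a})
    (measurableSet_le (by fun_prop) measurable_const) hE ha hp
    (fun t ht => by rw [← exp_log ha]; exact exp_le_exp.mpr (not_le.mp ht).le)
  simpa only [hpow, lintegral_exp_mul_setOf_mul_le hδ, exp_log ha] using hsplit

/-- For `δ ≠ 0` and `p ∈ [1,∞)` there is `C > 0` (depending only on `δ` and `p`)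
such that for every measurable set `E ⊆ ℝ`,
`∫_ℝ χ_E(t) e^{δt} dt ≤ C (∫_ℝ χ_E(t) e^{pδt} dt)^{1/p}`. -/
theorem indicator_exp_integral_le (δ : ℝ) (hδ : δ ≠ 0) (p : ℝ) (hp : 1 ≤ p) :
    ∃ C : ℝ, 0 < C ∧ ∀ E : Set ℝ, MeasurableSet E →
      (∫⁻ t in E, ENNReal.ofReal (Real.exp (δ * t))) ≤
        ENNReal.ofReal C *
          (∫⁻ t in E, ENNReal.ofReal (Real.exp (p * δ * t))) ^ (1 / p) := by
  have hp0 : 0 < p := one_pos.trans_le hp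
  refine ⟨1 / |δ| + 1, by positivity, fun E hE => ?_⟩
  set V := ∫⁻ t in E, ENNReal.ofReal (exp (p * δ * t))
  rcases eq_top_or_lt_top V with hV_top | hV_lt_top
  · rw [hV_top, ENNReal.top_rpow_of_pos (by positivity), ENNReal.mul_top (by simp; positivity)]
    exact le_top
  rcases eq_zero_or_pos V with hV_zero | hV_pos
  · have hE_null : volume E = 0 := measure_eq_zero_of_setLIntegral_eq_zero (by fun_prop)
      (fun t => by simp [exp_pos]) hV_zero
    simp [setLIntegral_measure_zero E _ hE_null]
  have hVr : 0 < V.toReal := ENNReal.toReal_pos hV_pos.ne' hV_lt_top.ne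
  set a := V.toReal ^ (1 / p)
  have hbalance : a ^ (1 - p) * V.toReal = a := by
    rw [← rpow_mul hVr.le, ← rpow_add_one hVr.ne']
    congr 1; field_simp; ring
  calc _ ≤ ENNReal.ofReal (a / |δ|) + ENNReal.ofReal (a ^ (1 - p)) * V :=
        setLIntegral_exp_mul_le hδ hp hE (rpow_pos_of_pos hVr _)
    _ = ENNReal.ofReal (1 / |δ| + 1) * V ^ (1 / p) := by
      have hV_rpow : V ^ (1 / p) = ENNReal.ofReal a := by
        rw [← ENNReal.ofReal_rpow_of_pos hVr, ENNReal.ofReal_toReal hV_lt_top.ne]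
      rw [hV_rpow, ← ENNReal.ofReal_toReal hV_lt_top.ne, ← ENNReal.ofReal_mul (by positivity),
        hbalance, ← ENNReal.ofReal_mul (by positivity),
        ← ENNReal.ofReal_add (by positivity) (by positivity)]
      ring_nf
end

section
/- Let δ ≠ 0 be a real number and let p ∈ [1,∞). There exists a constant C > 0 (depending only on δ and p) such that for every measurable set E ⊆ (0,∞), ∫_0^∞ χ_E(s) s^{δ−1} ds ≤ C (∫_0^∞ χ_E(s) s^{pδ−1} ds)^{1/p}. -/
open MeasureTheory Set Real
open scoped ENNReal

/-! Split `E` at the level `s ^ δ = b`. Below it, the substitution `u = s ^ δ` bounds the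
integral by `b / |δ|`; above it, `s ^ (δ - 1) = (s ^ δ) ^ (1 - p) * s ^ (p * δ - 1)` and
`(s ^ δ) ^ (1 - p) ≤ b ^ (1 - p)` because `p ≥ 1`. The choice `b ^ p = ∫_E s ^ (p * δ - 1)`
makes both terms equal to a multiple of `(∫_E s ^ (p * δ - 1)) ^ (1 / p)`. -/

lemma setLIntegral_rpow_sub_one_setOf_rpow_le {δ : ℝ} (hδ : δ ≠ 0) (b : ℝ) :
    ∫⁻ s in {s ∈ Ioi 0 | s ^ δ ≤ b}, ENNReal.ofReal (s ^ (δ - 1)) ≤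
      ENNReal.ofReal (b / |δ|) := by
  set T := {s ∈ Ioi (0 : ℝ) | s ^ δ ≤ b}
  have hT : MeasurableSet T := measurableSet_Ioi.inter
    (measurableSet_le (measurable_id.pow_const δ) measurable_const)
  have hδ' : 0 < |δ| := abs_pos.mpr hδ
  have hsub : (· ^ δ) '' T ⊆ Ioc 0 b := by
    rintro _ ⟨s, ⟨hs, hsb⟩, rfl⟩
    exact ⟨rpow_pos_of_pos hs δ, hsb⟩
  have hinj : InjOn (· ^ δ) T := (rpow_left_injOn hδ).mono fun s hs => mem_ofPred.mpr hs.1.le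
  have hvol : ∫⁻ s in T, ENNReal.ofReal (|δ * s ^ (δ - 1)|) ≤ ENNReal.ofReal b := by
    have := lintegral_image_eq_lintegral_abs_deriv_mul hT
      (fun s hs => (hasDerivAt_rpow_const (Or.inl (ne_of_gt hs.1))).hasDerivWithinAt)
      hinj 1
    simp only [Pi.one_apply, mul_one, lintegral_one, Measure.restrict_apply_univ] at this
    rw [← this]
    simpa using measure_mono (μ := volume) hsub
  calc ∫⁻ s in T, ENNReal.ofReal (s ^ (δ - 1))
      = ∫⁻ s in T, ENNReal.ofReal (|δ|⁻¹) * ENNReal.ofReal (|δ * s ^ (δ - 1)|) := by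
        refine setLIntegral_congr_fun hT fun s hs => ?_
        rw [← ENNReal.ofReal_mul (by positivity), abs_mul, abs_of_pos (rpow_pos_of_pos hs.1 _),
          inv_mul_cancel_left₀ hδ'.ne']
    _ ≤ ENNReal.ofReal (|δ|⁻¹) * ENNReal.ofReal b := by
        rw [lintegral_const_mul' _ _ ENNReal.ofReal_ne_top]
        gcongr
    _ = ENNReal.ofReal (b / |δ|) := by
        rw [← ENNReal.ofReal_mul (by positivity), inv_mul_eq_div]

lemma rpow_sub_one_le_of_lt_rpow {δ p b s : ℝ} (hp : 1 ≤ p) (hb : 0 < b) (hs : 0 < s)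
    (hbs : b < s ^ δ) : s ^ (δ - 1) ≤ b ^ (1 - p) * s ^ (p * δ - 1) := by
  calc s ^ (δ - 1) = (s ^ δ) ^ (1 - p) * s ^ (p * δ - 1) := by
        rw [← rpow_mul hs.le, ← rpow_add hs]; ring_nf
    _ ≤ b ^ (1 - p) * s ^ (p * δ - 1) := by
        gcongr ?_ * _
        exact rpow_le_rpow_of_nonpos hb hbs.le (by linarith)

lemma setLIntegral_rpow_sub_one_le_add {δ p b : ℝ} (hδ : δ ≠ 0) (hp : 1 ≤ p) (hb : 0 < b)
    {E : Set ℝ} (hE : E ⊆ Ioi 0) :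
    ∫⁻ s in E, ENNReal.ofReal (s ^ (δ - 1)) ≤
      ENNReal.ofReal (b / |δ|) +
        ENNReal.ofReal (b ^ (1 - p)) * ∫⁻ s in E, ENNReal.ofReal (s ^ (p * δ - 1)) := by
  have hcover : E ⊆ {s ∈ Ioi 0 | s ^ δ ≤ b} ∪ (E ∩ {s | b < s ^ δ}) := fun s hs => by
    rcases le_or_gt (s ^ δ) b with h | h
    · exact Or.inl ⟨hE hs, h⟩
    · exact Or.inr ⟨hs, h⟩
  have htail : ∫⁻ s in E ∩ {s | b < s ^ δ}, ENNReal.ofReal (s ^ (δ - 1)) ≤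
      ENNReal.ofReal (b ^ (1 - p)) * ∫⁻ s in E, ENNReal.ofReal (s ^ (p * δ - 1)) := by
    calc _ ≤ ∫⁻ s in E ∩ {s | b < s ^ δ},
            ENNReal.ofReal (b ^ (1 - p)) * ENNReal.ofReal (s ^ (p * δ - 1)) := by
          refine setLIntegral_mono (by fun_prop) fun s hs => ?_
          rw [← ENNReal.ofReal_mul (by positivity)]
          exact ENNReal.ofReal_le_ofReal (rpow_sub_one_le_of_lt_rpow hp hb (hE hs.1) hs.2)
      _ ≤ _ := by
          rw [lintegral_const_mul' _ _ ENNReal.ofReal_ne_top]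
          gcongr
          exact inter_subset_left
  calc _ ≤ _ := lintegral_mono_set hcover
    _ ≤ _ := lintegral_union_le _ _ _
    _ ≤ _ := add_le_add (setLIntegral_rpow_sub_one_setOf_rpow_le hδ b) htail

/-- For `δ ≠ 0` and `p ∈ [1,∞)` there is `C > 0` (depending only on `δ` and `p`)
such that for every measurable set `E ⊆ (0,∞)`,
`∫_0^∞ χ_E(s) s^{δ−1} ds ≤ C (∫_0^∞ χ_E(s) s^{pδ−1} ds)^{1/p}`. -/
theorem indicator_rpow_integral_le (δ : ℝ) (hδ : δ ≠ 0) (p : ℝ) (hp : 1 ≤ p) :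
    ∃ C : ℝ, 0 < C ∧ ∀ E : Set ℝ, MeasurableSet E → E ⊆ Set.Ioi 0 →
      (∫⁻ s in E, ENNReal.ofReal (s ^ (δ - 1))) ≤
        ENNReal.ofReal C *
          (∫⁻ s in E, ENNReal.ofReal (s ^ (p * δ - 1))) ^ (1 / p) := by
  have hδ' : 0 < |δ| := abs_pos.mpr hδ
  have hp' : 0 < 1 / p := one_div_pos.mpr (by linarith)
  refine ⟨|δ|⁻¹ + 1, by positivity, fun E _ hE => ?_⟩
  have hsplit := fun b (hb : 0 < b) => setLIntegral_rpow_sub_one_le_add hδ hp hb hE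
  generalize ∫⁻ s in E, ENNReal.ofReal (s ^ (p * δ - 1)) = I at hsplit ⊢
  rcases eq_or_ne I ∞ with rfl | hI
  · rw [ENNReal.top_rpow_of_pos hp', ENNReal.mul_top (by positivity)]
    exact le_top
  obtain ⟨i, hi, rfl⟩ : ∃ i : ℝ, 0 ≤ i ∧ ENNReal.ofReal i = I :=
    ⟨I.toReal, ENNReal.toReal_nonneg, ENNReal.ofReal_toReal hI⟩
  rcases hi.eq_or_lt with rfl | hi
  · rw [ENNReal.ofReal_zero, ENNReal.zero_rpow_of_pos hp', mul_zero]
    refine ENNReal.le_of_forall_pos_le_add fun ε hε _ => ?_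
    simpa [hδ'.ne'] using hsplit (ε * |δ|) (by positivity)
  have hbalance : (i ^ (1 / p)) ^ (1 - p) * i = i ^ (1 / p) := by
    rw [← rpow_mul hi.le, ← rpow_add_one hi.ne']
    congr 1
    field_simp
    ring
  calc _ ≤ _ := hsplit _ (rpow_pos_of_pos hi (1 / p))
    _ = ENNReal.ofReal (|δ|⁻¹ + 1) * ENNReal.ofReal i ^ (1 / p) := by
      rw [← ENNReal.ofReal_mul (by positivity), hbalance, ENNReal.ofReal_rpow_of_pos hi,
        ← ENNReal.ofReal_add (by positivity) (by positivity), ← ENNReal.ofReal_mul (by positivity)]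
      congr 1
      ring
end

section
/- Let n ≥ 3 and 2 ≤ d ≤ n−1 be integers. There exists a constant C > 0 such that for every measurable set E ⊆ (0,∞) and every s > 0, ∫_s^∞ χ_E(r) (1 − tanh²s/tanh²r)^{(d−2)/2} sinh^{d−1} r dr ≤ C (∫_0^∞ χ_E(r) sinh^{n−1} r dr)^{(d−1)/(n−1)}. -/
/-!
The weight `(1 - tanh² s / tanh² r)^((d-2)/2)` is at most `1` for `r > s > 0`, so it suffices to
bound `∫_{E ∩ (s,∞)} sinh^{d-1}` by `V^{(d-1)/(n-1)}` with `V = ∫_E sinh^{n-1}`. Split at the radius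
`b` with `sinh^{n-1} b = V`: on `(0, b]` the integral is at most `sinh^{d-1} b = V^{(d-1)/(n-1)}`,
and on `(b, ∞)` we have `sinh^{d-1} r ≤ sinh^{n-1} r / sinh^{n-d} b`, whose integral over `E` is at
most `V / sinh^{n-d} b = V^{(d-1)/(n-1)}` again.
-/

open MeasureTheory Set Real
open scoped ENNReal

namespace Real

theorem tanh_monotone : Monotone tanh := by
  intro x y hxy
  by_contra! hlt
  have := artanh_lt_artanh (neg_one_lt_tanh y) (tanh_lt_one x) hlt
  rw [artanh_tanh, artanh_tanh] at this
  linarith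

theorem one_sub_tanh_sq_div_tanh_sq_rpow_le_one {s r a : ℝ} (hs : 0 ≤ s) (hsr : s ≤ r)
    (ha : 0 ≤ a) : (1 - tanh s ^ 2 / tanh r ^ 2) ^ a ≤ 1 := by
  have hts : 0 ≤ tanh s := tanh_zero ▸ tanh_monotone hs
  have hq_le : tanh s ^ 2 / tanh r ^ 2 ≤ 1 :=
    div_le_one_of_le₀ (pow_le_pow_left₀ hts (tanh_monotone hsr) 2) (sq_nonneg _)
  have hq_nonneg : 0 ≤ tanh s ^ 2 / tanh r ^ 2 := by positivity
  exact rpow_le_one (by linarith) (by linarith) ha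

theorem integral_sinh_pow_le {m : ℕ} (hm : m ≠ 0) {b : ℝ} (hb : 0 ≤ b) :
    ∫ r in (0 : ℝ)..b, sinh r ^ m ≤ sinh b ^ m := by
  obtain ⟨k, rfl⟩ := Nat.exists_eq_succ_of_ne_zero hm
  have hderiv (x : ℝ) : HasDerivAt (fun r ↦ sinh r ^ (k + 1))
      ((k + 1) * sinh x ^ k * cosh x) x := by
    simpa using (hasDerivAt_sinh x).fun_pow (k + 1)
  have hcont : Continuous fun r ↦ sinh r ^ (k + 1) := continuous_sinh.fun_pow _
  -- `sinh ≤ cosh` makes `sinh^(k+1)` a lower bound for its own derivative on `[0, ∞)`.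
  have hle (x : ℝ) (hx : 0 ≤ x) : sinh x ^ (k + 1) ≤ (k + 1) * sinh x ^ k * cosh x := by
    have hsinh : 0 ≤ sinh x := sinh_nonneg_iff.2 hx
    calc sinh x ^ (k + 1) = sinh x ^ k * sinh x := pow_succ _ _
      _ ≤ sinh x ^ k * cosh x := mul_le_mul_of_nonneg_left (sinh_lt_cosh x).le (by positivity)
      _ ≤ (k + 1) * (sinh x ^ k * cosh x) :=
          le_mul_of_one_le_left (mul_nonneg (by positivity) (cosh_pos x).le)
            (le_add_of_nonneg_left k.cast_nonneg)
      _ = (k + 1) * sinh x ^ k * cosh x := (mul_assoc _ _ _).symm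
  have := intervalIntegral.integral_le_sub_of_hasDeriv_right_of_le hb hcont.continuousOn
    (fun x _ ↦ (hderiv x).hasDerivWithinAt) hcont.integrableOn_Icc (fun x hx ↦ hle x hx.1.le)
  simpa using this

end Real

theorem lintegral_Ioc_sinh_pow_le {m : ℕ} (hm : m ≠ 0) {b : ℝ} (hb : 0 ≤ b) :
    ∫⁻ r in Ioc 0 b, ENNReal.ofReal (sinh r ^ m) ≤ ENNReal.ofReal (sinh b ^ m) := by
  have hnonneg : 0 ≤ᵐ[volume.restrict (Ioc 0 b)] fun r ↦ sinh r ^ m := by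
    filter_upwards [ae_restrict_mem measurableSet_Ioc] with r hr
    exact pow_nonneg (sinh_nonneg_iff.2 hr.1.le) m
  rw [← ofReal_integral_eq_lintegral_ofReal (continuous_sinh.fun_pow m).integrableOn_Ioc hnonneg,
    ← intervalIntegral.integral_of_le hb]
  exact ENNReal.ofReal_le_ofReal (integral_sinh_pow_le hm hb)

theorem lintegral_inter_Ioi_sinh_pow_le_div (E : Set ℝ) {k m : ℕ} (hkm : k ≤ m) {b : ℝ}
    (hb : 0 < b) :
    ∫⁻ r in E ∩ Ioi b, ENNReal.ofReal (sinh r ^ k) ≤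
      (∫⁻ r in E, ENNReal.ofReal (sinh r ^ m)) / ENNReal.ofReal (sinh b ^ (m - k)) := by
  have hsinh_b : 0 < sinh b := sinh_pos_iff.2 hb
  have hmeas : Measurable fun r ↦ ENNReal.ofReal (sinh r ^ m) :=
    (continuous_sinh.fun_pow m).measurable.ennreal_ofReal
  have hpointwise : ∀ r ∈ E ∩ Ioi b, ENNReal.ofReal (sinh b ^ (m - k)) *
      ENNReal.ofReal (sinh r ^ k) ≤ ENNReal.ofReal (sinh r ^ m) := by
    intro r hr
    have hbr : sinh b ≤ sinh r := sinh_le_sinh.2 hr.2.le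
    have hsinh_r : 0 ≤ sinh r := hsinh_b.le.trans hbr
    rw [← ENNReal.ofReal_mul (by positivity)]
    refine ENNReal.ofReal_le_ofReal ?_
    calc sinh b ^ (m - k) * sinh r ^ k ≤ sinh r ^ (m - k) * sinh r ^ k := by gcongr
      _ = sinh r ^ m := by rw [← pow_add, Nat.sub_add_cancel hkm]
  rw [ENNReal.le_div_iff_mul_le (by simp [pow_pos hsinh_b]) (by simp), mul_comm,
    ← lintegral_const_mul' _ _ ENNReal.ofReal_ne_top]
  calc ∫⁻ r in E ∩ Ioi b, ENNReal.ofReal (sinh b ^ (m - k)) * ENNReal.ofReal (sinh r ^ k)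
      ≤ ∫⁻ r in E ∩ Ioi b, ENNReal.ofReal (sinh r ^ m) := setLIntegral_mono hmeas hpointwise
    _ ≤ ∫⁻ r in E, ENNReal.ofReal (sinh r ^ m) := lintegral_mono_set inter_subset_left

theorem lintegral_inter_Ioi_sinh_pow_le_add (E : Set ℝ) {k m : ℕ} (hk : k ≠ 0) (hkm : k ≤ m)
    {s t : ℝ} (hs : 0 ≤ s) (ht : 0 < t) :
    ∫⁻ r in E ∩ Ioi s, ENNReal.ofReal (sinh r ^ k) ≤
      ENNReal.ofReal (t ^ k) +
        (∫⁻ r in E, ENNReal.ofReal (sinh r ^ m)) / ENNReal.ofReal (t ^ (m - k)) := by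
  set b := arsinh t
  have hb : 0 < b := arsinh_pos_iff.2 ht
  have hsplit : E ∩ Ioi s ⊆ Ioc 0 b ∪ (E ∩ Ioi b) := by
    rintro r ⟨hrE, hsr⟩
    rcases le_or_gt r b with hrb | hbr
    · exact Or.inl ⟨hs.trans_lt hsr, hrb⟩
    · exact Or.inr ⟨hrE, hbr⟩
  calc ∫⁻ r in E ∩ Ioi s, ENNReal.ofReal (sinh r ^ k)
      ≤ ∫⁻ r in Ioc 0 b ∪ (E ∩ Ioi b), ENNReal.ofReal (sinh r ^ k) := lintegral_mono_set hsplit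
    _ ≤ (∫⁻ r in Ioc 0 b, ENNReal.ofReal (sinh r ^ k)) +
          ∫⁻ r in E ∩ Ioi b, ENNReal.ofReal (sinh r ^ k) := lintegral_union_le _ _ _
    _ ≤ _ := by
      rw [← sinh_arsinh t]
      exact add_le_add (lintegral_Ioc_sinh_pow_le hk hb.le)
        (lintegral_inter_Ioi_sinh_pow_le_div E hkm hb)

theorem ENNReal.ofReal_toReal_rpow_inv_pow {V : ℝ≥0∞} (hV₀ : V ≠ 0) (hV : V ≠ ⊤) (p : ℝ)
    (j : ℕ) : ENNReal.ofReal ((V.toReal ^ p⁻¹) ^ j) = V ^ ((j : ℝ) / p) := by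
  have hv : 0 < V.toReal := ENNReal.toReal_pos hV₀ hV
  rw [← Real.rpow_natCast, ← Real.rpow_mul hv.le, ← ENNReal.ofReal_rpow_of_pos hv,
    ENNReal.ofReal_toReal hV, inv_mul_eq_div]

theorem lintegral_inter_Ioi_sinh_pow_le_two_mul_rpow (E : Set ℝ) {k m : ℕ} (hk : k ≠ 0)
    (hkm : k ≤ m) {s : ℝ} (hs : 0 < s) :
    ∫⁻ r in E ∩ Ioi s, ENNReal.ofReal (sinh r ^ k) ≤
      2 * (∫⁻ r in E, ENNReal.ofReal (sinh r ^ m)) ^ ((k : ℝ) / m) := by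
  set V := ∫⁻ r in E, ENNReal.ofReal (sinh r ^ m)
  have hm : (m : ℝ) ≠ 0 := Nat.cast_ne_zero.2 (by omega)
  have hexp : 0 < (k : ℝ) / m := by positivity
  rcases eq_or_ne V ⊤ with hV | hV
  · simp [hV, ENNReal.top_rpow_of_pos hexp]
  rcases eq_or_ne V 0 with hV₀ | hV₀
  · calc ∫⁻ r in E ∩ Ioi s, ENNReal.ofReal (sinh r ^ k)
        ≤ V / ENNReal.ofReal (sinh s ^ (m - k)) := lintegral_inter_Ioi_sinh_pow_le_div E hkm hs
      _ = 0 := by rw [hV₀, ENNReal.zero_div]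
      _ ≤ _ := zero_le
  -- `t ^ m = V` makes both terms of the splitting bound equal to `V ^ (k / m)`.
  set t := V.toReal ^ (m : ℝ)⁻¹
  have ht : 0 < t := rpow_pos_of_pos (ENNReal.toReal_pos hV₀ hV) _
  have htail : V / ENNReal.ofReal (t ^ (m - k)) = V ^ ((k : ℝ) / m) := by
    calc V / ENNReal.ofReal (t ^ (m - k)) = V ^ (1 : ℝ) / V ^ (((m - k : ℕ) : ℝ) / m) := by
          rw [ENNReal.ofReal_toReal_rpow_inv_pow hV₀ hV, ENNReal.rpow_one]
      _ = V ^ (1 - ((m - k : ℕ) : ℝ) / m) := (ENNReal.rpow_sub _ _ hV₀ hV).symm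
      _ = V ^ ((k : ℝ) / m) := by
          congr 1
          rw [Nat.cast_sub hkm]
          field_simp
          ring
  calc ∫⁻ r in E ∩ Ioi s, ENNReal.ofReal (sinh r ^ k)
      ≤ ENNReal.ofReal (t ^ k) + V / ENNReal.ofReal (t ^ (m - k)) :=
        lintegral_inter_Ioi_sinh_pow_le_add E hk hkm hs.le ht
    _ = 2 * V ^ ((k : ℝ) / m) := by
      rw [htail, ENNReal.ofReal_toReal_rpow_inv_pow hV₀ hV, two_mul]

theorem abel_hyperbolic_indicator_endpoint_general (n d : ℕ) (hd : 2 ≤ d)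
    (hdn : d ≤ n - 1) :
    ∃ C : ℝ, 0 < C ∧ ∀ E : Set ℝ, MeasurableSet E → E ⊆ Set.Ioi 0 →
      ∀ s : ℝ, 0 < s →
        (∫⁻ r in E ∩ Set.Ioi s,
            ENNReal.ofReal
              ((1 - Real.tanh s ^ 2 / Real.tanh r ^ 2) ^ (((d : ℝ) - 2) / 2) *
                Real.sinh r ^ (d - 1))) ≤
          ENNReal.ofReal C *
            (∫⁻ r in E, ENNReal.ofReal (Real.sinh r ^ (n - 1)))
              ^ (((d : ℝ) - 1) / ((n : ℝ) - 1)) := by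
  refine ⟨2, two_pos, fun E _ _ s hs ↦ ?_⟩
  have hweight : 0 ≤ ((d : ℝ) - 2) / 2 :=
    div_nonneg (sub_nonneg.2 (by exact_mod_cast hd)) zero_le_two
  have hexp : ((d - 1 : ℕ) : ℝ) / ((n - 1 : ℕ) : ℝ) = ((d : ℝ) - 1) / ((n : ℝ) - 1) := by
    rw [Nat.cast_sub (by omega), Nat.cast_sub (by omega), Nat.cast_one]
  calc _ ≤ ∫⁻ r in E ∩ Ioi s, ENNReal.ofReal (sinh r ^ (d - 1)) := by
        refine setLIntegral_mono (continuous_sinh.fun_pow _).measurable.ennreal_ofReal ?_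
        intro r hr
        have hsinh_r : 0 ≤ sinh r := sinh_nonneg_iff.2 (hs.trans hr.2).le
        exact ENNReal.ofReal_le_ofReal (mul_le_of_le_one_left (pow_nonneg hsinh_r _)
          (one_sub_tanh_sq_div_tanh_sq_rpow_le_one hs.le hr.2.le hweight))
    _ ≤ 2 * (∫⁻ r in E, ENNReal.ofReal (sinh r ^ (n - 1))) ^ (((d - 1 : ℕ) : ℝ) / (n - 1 : ℕ)) :=
        lintegral_inter_Ioi_sinh_pow_le_two_mul_rpow E (by omega) (by omega) hs
    _ = _ := by rw [hexp, ENNReal.ofReal_ofNat]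

/-- Endpoint estimate on indicators for the Abel transform associated with the
`d`-dimensional totally geodesic Radon transform of radial functions on `ℍⁿ`:
for `n ≥ 3`, `2 ≤ d ≤ n−1` there is `C > 0` such that for every measurable
`E ⊆ (0,∞)` and every `s > 0`,
`∫_s^∞ χ_E(r) (1 − tanh²s/tanh²r)^{(d−2)/2} sinh^{d−1} r dr
  ≤ C (∫_0^∞ χ_E(r) sinh^{n−1} r dr)^{(d−1)/(n−1)}`. -/
theorem abel_hyperbolic_indicator_endpoint (n d : ℕ) (hn : 3 ≤ n) (hd : 2 ≤ d)
    (hdn : d ≤ n - 1) :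
    ∃ C : ℝ, 0 < C ∧ ∀ E : Set ℝ, MeasurableSet E → E ⊆ Set.Ioi 0 →
      ∀ s : ℝ, 0 < s →
        (∫⁻ r in E ∩ Set.Ioi s,
            ENNReal.ofReal
              ((1 - Real.tanh s ^ 2 / Real.tanh r ^ 2) ^ (((d : ℝ) - 2) / 2) *
                Real.sinh r ^ (d - 1))) ≤
          ENNReal.ofReal C *
            (∫⁻ r in E, ENNReal.ofReal (Real.sinh r ^ (n - 1)))
              ^ (((d : ℝ) - 1) / ((n : ℝ) - 1)) :=
  abel_hyperbolic_indicator_endpoint_general n d hd hdn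
end

section
/- Let n ≥ 2 and 1 ≤ d ≤ n−1 be integers and let 1 ≤ p < ∞. There is no constant C > 0 such that for all a ∈ (0,1), sup_{θ ∈ (0,π/2)} (cos θ)^{1−d} ∫_0^{cos θ} χ_{(0,a)}(u) (cos²θ − u²)^{(d−2)/2} du ≤ C (∫_0^1 χ_{(0,a)}(u) (1−u²)^{(n−2)/2} du)^{1/p}. Consequently the spherical Abel transform A_d⁺ is not bounded from L^{p,1}(Sⁿ) to L^∞ on radial functions for any p < ∞. -/
/-!
Take `cos θ = a`. The substitution `u = a t` shows that the left-hand side is then the positive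
constant `∫₀¹ (1 - t²)^((d-2)/2) dt`, independent of `a`, while the weight `(1 - u²)^((n-2)/2)` is
at most `1`, so the right-hand side is at most `C a^(1/p)`, which tends to `0` with `a`.
-/

open MeasureTheory Set Real Filter Topology
open scoped ENNReal

lemma lintegral_Ioo_sq_sub_sq_rpow {c : ℝ} (hc : 0 < c) (e : ℝ) :
    ∫⁻ u in Ioo 0 c, ENNReal.ofReal ((c ^ 2 - u ^ 2) ^ e) =
      ENNReal.ofReal (c ^ (2 * e + 1)) * ∫⁻ t in Ioo 0 1, ENNReal.ofReal ((1 - t ^ 2) ^ e) := by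
  have himage : (c * ·) '' Ioo 0 1 = Ioo 0 c := by
    rw [image_mul_left_Ioo hc, mul_zero, mul_one]
  rw [← himage, lintegral_image_eq_lintegral_abs_deriv_mul measurableSet_Ioo
    (fun _ _ => (hasDerivAt_const_mul c).hasDerivWithinAt)
    (mul_right_injective₀ hc.ne').injOn, ← lintegral_const_mul' _ _ ENNReal.ofReal_ne_top]
  refine setLIntegral_congr_fun measurableSet_Ioo fun t ht => ?_
  have h1 : 0 ≤ 1 - t ^ 2 := by nlinarith [ht.1, ht.2]
  rw [abs_of_pos hc, ← ENNReal.ofReal_mul hc.le, ← ENNReal.ofReal_mul (by positivity),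
    show c ^ 2 - (c * t) ^ 2 = c ^ 2 * (1 - t ^ 2) by ring, mul_rpow (by positivity) h1,
    rpow_add hc, rpow_one, ← rpow_natCast, ← rpow_mul hc.le]
  ring_nf

lemma lintegral_Ioo_one_sub_sq_rpow_pos (e : ℝ) :
    0 < ∫⁻ t in Ioo 0 1, ENNReal.ofReal ((1 - t ^ 2) ^ e) := by
  rw [setLIntegral_pos_iff (by fun_prop)]
  have hsupp : Ioo (0 : ℝ) 1 ⊆ Function.support fun t : ℝ => ENNReal.ofReal ((1 - t ^ 2) ^ e) :=
    fun t ht => (ENNReal.ofReal_pos.2 (rpow_pos_of_pos (by nlinarith [ht.1, ht.2]) e)).ne'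
  rw [inter_eq_right.2 hsupp, Real.volume_Ioo]
  simp

lemma lintegral_Ioo_one_sub_sq_rpow_le {a e : ℝ} (ha : a ≤ 1) (he : 0 ≤ e) :
    ∫⁻ u in Ioo 0 a, ENNReal.ofReal ((1 - u ^ 2) ^ e) ≤ ENNReal.ofReal a := by
  calc ∫⁻ u in Ioo 0 a, ENNReal.ofReal ((1 - u ^ 2) ^ e)
      ≤ ∫⁻ _ in Ioo 0 a, 1 := setLIntegral_mono' measurableSet_Ioo fun u hu =>
        ENNReal.ofReal_le_one.2 (rpow_le_one (by nlinarith [hu.1, hu.2]) (by nlinarith) he)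
    _ = ENNReal.ofReal a := by rw [setLIntegral_const, one_mul, Real.volume_Ioo, sub_zero]

lemma tendsto_const_mul_ofReal_rpow_nhdsGT_zero (C : ℝ) {r : ℝ} (hr : 0 < r) :
    Tendsto (fun a => ENNReal.ofReal C * ENNReal.ofReal a ^ r) (𝓝[>] 0) (𝓝 0) := by
  have hcont := (ENNReal.continuous_rpow_const (y := r)).comp ENNReal.continuous_ofReal
  have := ENNReal.Tendsto.const_mul (hcont.tendsto 0) (Or.inr (ENNReal.ofReal_ne_top (r := C)))
  rw [Function.comp_apply, ENNReal.ofReal_zero, ENNReal.zero_rpow_of_pos hr, mul_zero] at this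
  exact this.mono_left nhdsWithin_le_nhds

theorem abel_sphere_no_endpoint_general (n d : ℕ) (hn : 2 ≤ n)
    (p : ℝ) (hp1 : 1 ≤ p) :
    ¬ ∃ C : ℝ, 0 < C ∧ ∀ a : ℝ, 0 < a → a < 1 →
      ∀ θ : ℝ, 0 < θ → θ < Real.pi / 2 →
        ENNReal.ofReal (Real.cos θ ^ ((1 : ℝ) - d)) *
            (∫⁻ u in Set.Ioo 0 a ∩ Set.Ioo 0 (Real.cos θ),
              ENNReal.ofReal ((Real.cos θ ^ 2 - u ^ 2) ^ (((d : ℝ) - 2) / 2))) ≤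
          ENNReal.ofReal C *
            (∫⁻ u in Set.Ioo (0 : ℝ) a,
              ENNReal.ofReal ((1 - u ^ 2) ^ (((n : ℝ) - 2) / 2))) ^ (1 / p) := by
  rintro ⟨C, -, hbound⟩
  set κ := ∫⁻ t in Ioo 0 1, ENNReal.ofReal ((1 - t ^ 2) ^ (((d : ℝ) - 2) / 2))
  have hlhs {a : ℝ} (ha : 0 < a) : ENNReal.ofReal (a ^ ((1 : ℝ) - d)) *
      ∫⁻ u in Ioo 0 a ∩ Ioo 0 a, ENNReal.ofReal ((a ^ 2 - u ^ 2) ^ (((d : ℝ) - 2) / 2)) = κ := by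
    rw [inter_self, lintegral_Ioo_sq_sub_sq_rpow ha, ← mul_assoc,
      ← ENNReal.ofReal_mul (by positivity), ← rpow_add ha,
      show (1 - d : ℝ) + (2 * ((d - 2) / 2) + 1) = 0 by ring, rpow_zero, ENNReal.ofReal_one,
      one_mul]
  have hn' : (0 : ℝ) ≤ ((n : ℝ) - 2) / 2 := by
    have : (2 : ℝ) ≤ n := by exact_mod_cast hn
    linarith
  obtain ⟨a, hsmall, ha0, ha1⟩ :=
    (((tendsto_const_mul_ofReal_rpow_nhdsGT_zero C (by positivity : 0 < 1 / p)).eventually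
      (gt_mem_nhds (lintegral_Ioo_one_sub_sq_rpow_pos _))).and (Ioo_mem_nhdsGT one_pos)).exists
  have hcontra := hbound a ha0 ha1 (arccos a) (arccos_pos.2 ha1) (arccos_lt_pi_div_two.2 ha0)
  rw [cos_arccos (by linarith) ha1.le, hlhs ha0] at hcontra
  exact hsmall.not_ge (hcontra.trans (mul_le_mul_right (ENNReal.rpow_le_rpow
    (lintegral_Ioo_one_sub_sq_rpow_le ha1.le hn') (by positivity)) _))

/-- The spherical Abel transform `A_d⁺` is not bounded from `L^{p,1}(Sⁿ)` (radial) to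
`L^∞` for any `p < ∞`: there is no constant `C > 0` such that for all `a ∈ (0,1)`,
`sup_{θ ∈ (0,π/2)} (cos θ)^{1−d} ∫_0^{cos θ} χ_{(0,a)}(u)(cos²θ − u²)^{(d−2)/2} du
  ≤ C (∫_0^1 χ_{(0,a)}(u)(1−u²)^{(n−2)/2} du)^{1/p}`. -/
theorem abel_sphere_no_endpoint (n d : ℕ) (hn : 2 ≤ n) (hd : 1 ≤ d) (hdn : d ≤ n - 1)
    (p : ℝ) (hp1 : 1 ≤ p) :
    ¬ ∃ C : ℝ, 0 < C ∧ ∀ a : ℝ, 0 < a → a < 1 →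
      ∀ θ : ℝ, 0 < θ → θ < Real.pi / 2 →
        ENNReal.ofReal (Real.cos θ ^ ((1 : ℝ) - d)) *
            (∫⁻ u in Set.Ioo 0 a ∩ Set.Ioo 0 (Real.cos θ),
              ENNReal.ofReal ((Real.cos θ ^ 2 - u ^ 2) ^ (((d : ℝ) - 2) / 2))) ≤
          ENNReal.ofReal C *
            (∫⁻ u in Set.Ioo (0 : ℝ) a,
              ENNReal.ofReal ((1 - u ^ 2) ^ (((n : ℝ) - 2) / 2))) ^ (1 / p) :=
  abel_sphere_no_endpoint_general n d hn p hp1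
end
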